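/- arXiv:1407.5165 — 6 statements merged into one kernel-verified Lean document; each statement's English description precedes it below -/
import Mathlib

section
/- For every integer n ≥ 1, the multiple zeta value ζ(2,2,...,2) with n twos equals π^{2n}/(2n+1)!. -/
/-!
Let `eₙ` be the sum of `∏_{k ∈ s} 1/k²` over the `n`-element sets `s` of positive integers;
listing each `s` increasingly identifies `eₙ` with `ζ(2,…,2)`. Expanding the product gives
`∑ eₙ wⁿ = ∏_{k ≥ 1} (1 + w/k²)`, and for `z² = -w` Euler's sine product turns the right-hand
side into `sin(πz)/(πz) = ∑ π²ⁿ wⁿ/(2n+1)!`. Both power series converge on all of `ℂ`, so their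
coefficients agree.
-/

open Topology

theorem hasSum_tsum_powersetCard_prod_mul_pow {ι R : Type*} [NormedCommRing R] [NormOneClass R]
    [CompleteSpace R] {a : ι → R} (ha : Summable (‖a ·‖)) (w : R) :
    HasSum (fun n => (∑' s : Set.powersetCard ι n, ∏ i ∈ (s : Finset ι), a i) * w ^ n)
      (∏' i, (1 + w * a i)) := by
  have hs : Summable fun s : Finset ι => ∏ i ∈ s, w * a i :=
    summable_finsetProd_of_summable_norm <| (ha.mul_left ‖w‖).of_nonneg_of_le
      (fun _ => norm_nonneg _) (fun _ => norm_mul_le _ _)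
  rw [tprod_one_add hs]
  refine (hs.hasSum.tsum_fiberwise Finset.card).congr_fun fun n => ?_
  have hsum : Summable fun s : Set.powersetCard ι n => ∏ i ∈ (s : Finset ι), a i :=
    (summable_finsetProd_of_summable_norm ha).subtype _
  rw [← hsum.tsum_mul_right]
  exact tsum_congr fun s => by rw [Finset.prod_mul_distrib, Finset.prod_const, s.2, mul_comm]

theorem eq_of_hasSum_mul_pow {𝕜 : Type*} [NontriviallyNormedField 𝕜] {a b : ℕ → 𝕜}
    {F : 𝕜 → 𝕜} (ha : ∀ᶠ z in 𝓝 0, HasSum (fun n => a n * z ^ n) (F z))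
    (hb : ∀ᶠ z in 𝓝 0, HasSum (fun n => b n * z ^ n) (F z)) : a = b := by
  have hasFPowerSeriesAt_ofScalars : ∀ c : ℕ → 𝕜,
      (∀ᶠ z in 𝓝 0, HasSum (fun n => c n * z ^ n) (F z)) →
      HasFPowerSeriesAt F (FormalMultilinearSeries.ofScalars 𝕜 c) 0 := fun c hc =>
    hasFPowerSeriesAt_iff.2 <| hc.mono fun z hz => by
      simpa [FormalMultilinearSeries.coeff_ofScalars, mul_comm] using hz
  exact FormalMultilinearSeries.ofScalars_series_injective 𝕜 𝕜
    ((hasFPowerSeriesAt_ofScalars a ha).eq_formalMultilinearSeries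
      (hasFPowerSeriesAt_ofScalars b hb))

theorem Complex.hasSum_sin_div {z : ℂ} (hz : z ≠ 0) :
    HasSum (fun n : ℕ => (-z ^ 2) ^ n / (2 * n + 1).factorial) (sin z / z) := by
  refine ((hasSum_sin z).div_const z).congr_fun fun n => ?_
  rw [neg_pow, pow_succ z (2 * n), pow_mul]
  field_simp

theorem Complex.hasSum_tprod_one_add_mul_inv_sq (w : ℂ) :
    HasSum (fun n : ℕ => (Real.pi : ℂ) ^ (2 * n) / (2 * n + 1).factorial * w ^ n)
      (∏' k : ℕ+, (1 + w * ((k : ℂ) ^ 2)⁻¹)) := by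
  rcases eq_or_ne w 0 with rfl | hw
  · simpa using hasSum_single (f := fun n : ℕ =>
      (Real.pi : ℂ) ^ (2 * n) / (2 * n + 1).factorial * 0 ^ n) 0 fun n hn => by simp [hn]
  obtain ⟨z, hz⟩ := IsAlgClosed.exists_pow_nat_eq (-w) two_pos
  have hz0 : z ≠ 0 := by rintro rfl; simp_all
  have hπz : (Real.pi : ℂ) * z ≠ 0 := mul_ne_zero (ofReal_ne_zero.2 Real.pi_ne_zero) hz0
  have euler_sin_prod :
      ∏' k : ℕ+, (1 + w * ((k : ℂ) ^ 2)⁻¹) = sin (Real.pi * z) / (Real.pi * z) := by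
    rw [tprod_pnat_eq_tprod_succ (f := fun k : ℕ => 1 + w * ((k : ℂ) ^ 2)⁻¹)]
    convert ((multipliable_sineTerm z).hasProd_iff_tendsto_nat.2
      (tendsto_euler_sin_prod' hz0)).tprod_eq using 3 with k
    simp [sineTerm, hz, div_eq_mul_inv]
  rw [euler_sin_prod]
  refine (hasSum_sin_div hπz).congr_fun fun n => ?_
  rw [mul_pow, hz]
  ring

def strictMonoPosEquiv (ι : Type*) [LinearOrder ι] :
    {f : ι → ℕ // StrictMono f ∧ ∀ i, 1 ≤ f i} ≃ (ι ↪o ℕ+) where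
  toFun f := OrderEmbedding.ofStrictMono (fun i => ⟨f.1 i, f.2.2 i⟩) fun _ _ h => f.2.1 h
  invFun g := ⟨fun i => g i, fun _ _ h => g.strictMono h, fun i => (g i).pos⟩
  left_inv _ := rfl
  right_inv _ := rfl

theorem tsum_strictMono_pos_eq_tsum_powersetCard {R : Type*} [CommSemiring R]
    [TopologicalSpace R] (g : ℕ → R) (n : ℕ) :
    ∑' k : {f : Fin n → ℕ // StrictMono f ∧ ∀ i, 1 ≤ f i}, ∏ i, g (k.1 i)
      = ∑' s : Set.powersetCard ℕ+ n, ∏ k ∈ (s : Finset ℕ+), g k := by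
  rw [← ((strictMonoPosEquiv (Fin n)).trans Set.powersetCard.ofFinEmbEquiv).tsum_eq]
  refine tsum_congr fun k => ?_
  simp only [Equiv.trans_apply, Set.powersetCard.ofFinEmbEquiv_apply,
    Set.powersetCard.val_ofFinEmb, Finset.prod_map, RelEmbedding.coe_toEmbedding]
  rfl

theorem tsum_powersetCard_prod_inv_sq (n : ℕ) :
    ∑' s : Set.powersetCard ℕ+ n, ∏ k ∈ (s : Finset ℕ+), (1 : ℝ) / ((k : ℕ) : ℝ) ^ 2
      = Real.pi ^ (2 * n) / (2 * n + 1).factorial := by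
  have ha : Summable fun k : ℕ+ => ‖(((k : ℕ) : ℂ) ^ 2)⁻¹‖ := by
    simpa [Function.comp_def] using
      (Real.summable_one_div_nat_pow.2 one_lt_two).comp_injective PNat.coe_injective
  have h := congrFun (eq_of_hasSum_mul_pow
    (F := fun w : ℂ => ∏' k : ℕ+, (1 + w * (((k : ℕ) : ℂ) ^ 2)⁻¹))
    (.of_forall (hasSum_tsum_powersetCard_prod_mul_pow ha))
    (.of_forall Complex.hasSum_tprod_one_add_mul_inv_sq)) n
  apply Complex.ofReal_injective
  push_cast
  simpa only [one_div] using h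

theorem zeta_two_repeated_general (n : ℕ) :
    ∑' k : {f : Fin n → ℕ // StrictMono f ∧ ∀ i, 1 ≤ f i},
      ∏ i, (1 : ℝ) / ((k.1 i : ℝ)) ^ 2
    = Real.pi ^ (2 * n) / (Nat.factorial (2 * n + 1) : ℝ) := by
  rw [tsum_strictMono_pos_eq_tsum_powersetCard (fun k => (1 : ℝ) / (k : ℝ) ^ 2),
    tsum_powersetCard_prod_inv_sq]

/-- For every integer `n ≥ 1`, the multiple zeta value `ζ(2,2,...,2)` with `n` twos,
defined as the sum over strictly increasing tuples `1 ≤ k₁ < ... < kₙ` of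
`1/(k₁² ⋯ kₙ²)`, equals `π^(2n)/(2n+1)!`. -/
theorem zeta_two_repeated (n : ℕ) (hn : 1 ≤ n) :
    ∑' k : {f : Fin n → ℕ // StrictMono f ∧ ∀ i, 1 ≤ f i},
      ∏ i, (1 : ℝ) / ((k.1 i : ℝ)) ^ 2
    = Real.pi ^ (2 * n) / (Nat.factorial (2 * n + 1) : ℝ) :=
  zeta_two_repeated_general n
end

section
/- The double zeta value satisfies Euler's relation: ζ(1,2) = ζ(3), i.e., ∑_{1 ≤ m < n} 1/(m · n^2) = ∑_{n ≥ 1} 1/n^3. -/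
/-!
Euler's argument through Tornheim's sum `T = ∑_{m,n ≥ 1} 1/(m n (m + n))`, evaluated in two ways.
The partial fractions `1/(m n (m + n)) = 1/(m (m + n)²) + 1/(n (m + n)²)` give `T = 2 ζ(1,2)`.
Summing over `n` first, `∑_n 1/(n (m + n)) = H_m / m` telescopes, so
`T = ∑_m H_m / m² = ∑_m H_{m-1} / m² + ∑_m 1/m³ = ζ(1,2) + ζ(3)`.
-/

open Filter Finset Topology

theorem hasSum_sub_add_one_of_antitone {a : ℕ → ℝ} (ha : Antitone a)
    (h0 : Tendsto a atTop (𝓝 0)) : HasSum (fun m => a m - a (m + 1)) (a 0) := by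
  rw [hasSum_iff_tendsto_nat_of_nonneg (fun m => sub_nonneg.2 (ha m.le_succ))]
  simp_rw [sum_range_sub']
  simpa using h0.const_sub (a 0)

theorem hasSum_sub_add_of_antitone {a : ℕ → ℝ} (ha : Antitone a)
    (h0 : Tendsto a atTop (𝓝 0)) (k : ℕ) :
    HasSum (fun m => a m - a (m + k)) (∑ i ∈ range k, a i) := by
  induction k with
  | zero => simp
  | succ k ih =>
    have hk : HasSum (fun m => a (m + k) - a (m + 1 + k)) (a k) := by
      simpa using hasSum_sub_add_one_of_antitone (a := fun m => a (m + k))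
        (fun i j hij => ha (by omega)) (h0.comp (tendsto_add_atTop_nat k))
    rw [sum_range_succ]
    refine (ih.add hk).congr_fun fun m => ?_
    ring_nf

theorem summable_one_div_mul_sqrt : Summable fun n : ℕ => 1 / ((n : ℝ) * √n) := by
  refine (Real.summable_one_div_nat_rpow.2 (by norm_num : (1 : ℝ) < 1 + 1 / 2)).congr fun n => ?_
  rw [Real.sqrt_eq_rpow, Real.rpow_one_add' n.cast_nonneg (by norm_num)]

/-- Summand of Tornheim's sum `T`, extended to `ℕ × ℕ` by `1 / 0 = 0`. -/
noncomputable def tornheimTerm (p : ℕ × ℕ) : ℝ := 1 / ((p.1 : ℝ) * p.2 * (p.1 + p.2))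

/-- Summand of `ζ(1,2)`, extended by zero to `ℕ × ℕ`; at `m = 0` this again relies on `1 / 0 = 0`. -/
noncomputable def zetaOneTwoTerm (p : ℕ × ℕ) : ℝ :=
  if p.1 < p.2 then 1 / ((p.1 : ℝ) * (p.2 : ℝ) ^ 2) else 0

theorem tsum_subtype_eq_tsum_zetaOneTwoTerm :
    ∑' p : {q : ℕ × ℕ // 1 ≤ q.1 ∧ q.1 < q.2}, (1 : ℝ) / ((p.1.1 : ℝ) * (p.1.2 : ℝ) ^ 2)
      = ∑' p, zetaOneTwoTerm p := by
  refine (tsum_subtype {q : ℕ × ℕ | 1 ≤ q.1 ∧ q.1 < q.2}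
    fun q => (1 : ℝ) / ((q.1 : ℝ) * (q.2 : ℝ) ^ 2)).trans (tsum_congr fun q => ?_)
  rcases Nat.eq_zero_or_pos q.1 with h | h
  · simp [zetaOneTwoTerm, h]
  · simp [Set.indicator_apply, zetaOneTwoTerm, h.ne', Nat.one_le_iff_ne_zero]

theorem zetaOneTwoTerm_le (p : ℕ × ℕ) :
    zetaOneTwoTerm p ≤ 1 / ((p.1 : ℝ) * √p.1) * (1 / ((p.2 : ℝ) * √p.2)) := by
  obtain ⟨k, N⟩ := p
  unfold zetaOneTwoTerm
  split_ifs with h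
  · rcases Nat.eq_zero_or_pos k with rfl | hk
    · simp
    have hN0 : 0 < N := hk.trans h
    have hkN : √(k : ℝ) ≤ √(N : ℝ) := Real.sqrt_le_sqrt (by exact_mod_cast h.le)
    have hN : √(N : ℝ) * √N = N := Real.mul_self_sqrt N.cast_nonneg
    rw [div_mul_div_comm, one_mul]
    apply one_div_le_one_div_of_le (by positivity)
    calc (k : ℝ) * √k * (N * √N) ≤ k * √N * (N * √N) := by gcongr
      _ = k * N ^ 2 := by rw [mul_mul_mul_comm, hN]; ring
  · positivity

theorem summable_zetaOneTwoTerm : Summable zetaOneTwoTerm := by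
  refine .of_nonneg_of_le (fun p => ?_) zetaOneTwoTerm_le
    (summable_one_div_mul_sqrt.mul_of_nonneg summable_one_div_mul_sqrt
      (fun n => by positivity) (fun n => by positivity))
  unfold zetaOneTwoTerm
  split_ifs <;> positivity

theorem hasSum_zetaOneTwoTerm_fiber (N : ℕ) :
    HasSum (fun k => zetaOneTwoTerm (k, N)) (∑ k ∈ range N, 1 / ((k : ℝ) * (N : ℝ) ^ 2)) := by
  rw [← sum_congr rfl fun k hk => if_pos (mem_range.1 hk)]
  exact hasSum_sum_of_ne_finset_zero fun k hk => if_neg (by simpa using hk)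

theorem tornheimTerm_eq (m n : ℕ) :
    tornheimTerm (m, n) = zetaOneTwoTerm (m, m + n) + zetaOneTwoTerm (n, n + m) := by
  rcases Nat.eq_zero_or_pos m with rfl | hm
  · simp [tornheimTerm, zetaOneTwoTerm]
  rcases Nat.eq_zero_or_pos n with rfl | hn
  · simp [tornheimTerm, zetaOneTwoTerm]
  rw [tornheimTerm, zetaOneTwoTerm, zetaOneTwoTerm, if_pos (by simpa), if_pos (by simpa)]
  have hm' : (m : ℝ) ≠ 0 := by positivity
  have hn' : (n : ℝ) ≠ 0 := by positivity
  push_cast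
  field_simp
  ring

theorem hasSum_tornheimTerm {Z : ℝ} (hz : HasSum zetaOneTwoTerm Z) :
    HasSum tornheimTerm (2 * Z) := by
  have hinj : Function.Injective fun p : ℕ × ℕ => (p.1, p.1 + p.2) := by
    rintro ⟨a, b⟩ ⟨c, d⟩ h
    simp only [Prod.mk.injEq] at h
    ext <;> omega
  have hz' : HasSum (zetaOneTwoTerm ∘ fun p : ℕ × ℕ => (p.1, p.1 + p.2)) Z := by
    refine (hinj.hasSum_iff (f := zetaOneTwoTerm) fun q hq => ?_).2 hz
    rw [zetaOneTwoTerm, if_neg]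
    exact fun hlt => hq ⟨(q.1, q.2 - q.1), by ext <;> simp; omega⟩
  rw [two_mul]
  exact (hz'.add ((Equiv.prodComm ℕ ℕ).hasSum_iff.2 hz')).congr_fun fun p =>
    tornheimTerm_eq p.1 p.2

theorem hasSum_tornheimTerm_fiber (m : ℕ) :
    HasSum (fun n => tornheimTerm (m, n)) (∑ k ∈ range (m + 1), 1 / ((k : ℝ) * (m : ℝ) ^ 2)) := by
  rcases Nat.eq_zero_or_pos m with rfl | hm
  · simp [tornheimTerm]
  have hm' : (m : ℝ) ≠ 0 := by positivity
  have htel := (hasSum_sub_add_of_antitone (a := fun n : ℕ => 1 / ((n : ℝ) + 1))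
    (fun i j hij => by dsimp only; gcongr) tendsto_one_div_add_atTop_nhds_zero_nat m).mul_left
    (1 / (m : ℝ) ^ 2)
  rw [← hasSum_nat_add_iff' 1]
  have hval : ∑ k ∈ range (m + 1), 1 / ((k : ℝ) * (m : ℝ) ^ 2) - ∑ n ∈ range 1, tornheimTerm (m, n)
      = 1 / (m : ℝ) ^ 2 * ∑ i ∈ range m, 1 / ((i : ℝ) + 1) := by
    rw [sum_range_succ', mul_sum]
    simp [tornheimTerm]
  rw [hval]
  refine htel.congr_fun fun n => ?_
  simp only [tornheimTerm]
  push_cast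
  field_simp
  ring

/-- Euler's relation `ζ(1,2) = ζ(3)`:
`∑_{1 ≤ m < n} 1/(m n²) = ∑_{n ≥ 1} 1/n³`. -/
theorem euler_zeta_one_two :
    ∑' p : {q : ℕ × ℕ // 1 ≤ q.1 ∧ q.1 < q.2},
      (1 : ℝ) / ((p.1.1 : ℝ) * (p.1.2 : ℝ) ^ 2)
    = ∑' n : ℕ, (1 : ℝ) / ((n : ℝ) + 1) ^ 3 := by
  rw [tsum_subtype_eq_tsum_zetaOneTwoTerm]
  set Z := ∑' p, zetaOneTwoTerm p
  have hz : HasSum zetaOneTwoTerm Z := summable_zetaOneTwoTerm.hasSum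
  have hT := (hasSum_tornheimTerm hz).prod_fiberwise hasSum_tornheimTerm_fiber
  have hZ := ((Equiv.prodComm ℕ ℕ).hasSum_iff.2 hz).prod_fiberwise hasSum_zetaOneTwoTerm_fiber
  have hcube : HasSum (fun n : ℕ => 1 / (n : ℝ) ^ 3) Z := by
    have hdiff := hT.sub hZ
    rw [two_mul, add_sub_cancel_right] at hdiff
    refine hdiff.congr_fun fun n => ?_
    rw [sum_range_succ, add_sub_cancel_left, pow_succ']
  have hshift := (hasSum_nat_add_iff' 1).2 hcube
  push_cast at hshift
  simpa using hshift.tsum_eq.symm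
end

section
/- The iterated integral ∫_{0 < t_1 < t_2 < t_3 < 1} (dt_1/(1-t_1)) (dt_2/t_2) (dt_3/t_3) equals ζ(3) = ∑_{n≥1} 1/n^3. -/
open MeasureTheory Set
open scoped ENNReal

/-!
Expand `1 / (1 - t₁) = ∑ₙ t₁ⁿ` and integrate termwise (monotone convergence, in `ℝ≥0∞`).
By Fubini the `n`-th term is an iterated integral, and `φ ↦ (1 / t) ∫₀ᵗ φ` sends `tⁿ` to
`tⁿ / (n + 1)`; applying it twice and then integrating over `(0, 1)` gives `1 / (n + 1)³`.
-/

def openSimplex : Set (ℝ × ℝ × ℝ) :=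
  {p | 0 < p.1 ∧ p.1 < p.2.1 ∧ p.2.1 < p.2.2 ∧ p.2.2 < 1}

theorem measurableSet_openSimplex : MeasurableSet openSimplex := by
  unfold openSimplex
  measurability

theorem indicator_openSimplex (F : ℝ × ℝ × ℝ → ℝ≥0∞) (x y z : ℝ) :
    openSimplex.indicator F (x, y, z) =
      (Ioo 0 1).indicator (fun z ↦ (Ioo 0 z).indicator
        (fun y ↦ (Ioo 0 y).indicator (fun x ↦ F (x, y, z)) x) y) z := by
  simp only [indicator, openSimplex, mem_Ioo]
  split_ifs <;> grind

theorem indicator_lintegral_eq_lintegral_indicator {α β : Type*} [MeasurableSpace α]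
    (μ : Measure α) (s : Set β) (G : α → β → ℝ≥0∞) (z : β) :
    s.indicator (fun z ↦ ∫⁻ a, G a z ∂μ) z = ∫⁻ a, s.indicator (G a) z ∂μ := by
  by_cases hz : z ∈ s <;> simp [hz]

theorem lintegral_openSimplex {F : ℝ × ℝ × ℝ → ℝ≥0∞} (hF : Measurable F) :
    ∫⁻ p in openSimplex, F p =
      ∫⁻ z in Ioo 0 1, ∫⁻ y in Ioo 0 z, ∫⁻ x in Ioo 0 y, F (x, y, z) := by
  have hFS : Measurable (openSimplex.indicator F) := hF.indicator measurableSet_openSimplex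
  rw [← lintegral_indicator measurableSet_openSimplex, Measure.volume_eq_prod,
    lintegral_prod_symm' _ hFS, Measure.volume_eq_prod,
    lintegral_prod_symm' _ (hFS.lintegral_prod_left' (μ := volume)),
    ← lintegral_indicator measurableSet_Ioo]
  refine lintegral_congr fun z ↦ ?_
  simp only [indicator_openSimplex, indicator_lintegral_eq_lintegral_indicator,
    ← lintegral_indicator measurableSet_Ioo]

theorem setLIntegral_Ioo_pow_mul (n : ℕ) {b : ℝ} (hb : 0 ≤ b) {C : ℝ} (hC : 0 ≤ C) :
    ∫⁻ x in Ioo 0 b, ENNReal.ofReal (x ^ n * C) =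
      ENNReal.ofReal (b ^ (n + 1) / (n + 1) * C) := by
  rw [← ofReal_integral_eq_lintegral_ofReal, ← integral_Ioc_eq_integral_Ioo,
    ← intervalIntegral.integral_of_le hb, intervalIntegral.integral_mul_const, integral_pow,
    zero_pow n.succ_ne_zero, sub_zero]
  · exact (continuous_pow n |>.mul continuous_const).integrableOn_Icc.mono_set
      Ioo_subset_Icc_self
  · filter_upwards [ae_restrict_mem measurableSet_Ioo] with x hx
    exact mul_nonneg (pow_nonneg hx.1.le n) hC

theorem lintegral_openSimplex_pow (n : ℕ) :
    ∫⁻ p in openSimplex, ENNReal.ofReal (p.1 ^ n * (p.2.1 * p.2.2)⁻¹) =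
      ENNReal.ofReal (((n : ℝ) + 1) ^ 3)⁻¹ := by
  rw [lintegral_openSimplex (by fun_prop)]
  calc ∫⁻ z in Ioo 0 1, ∫⁻ y in Ioo 0 z, ∫⁻ x in Ioo 0 y, ENNReal.ofReal (x ^ n * (y * z)⁻¹)
      = ∫⁻ z in Ioo 0 1, ∫⁻ y in Ioo 0 z, ENNReal.ofReal (y ^ n * (((n : ℝ) + 1) * z)⁻¹) := by
        refine setLIntegral_congr_fun measurableSet_Ioo fun z hz ↦
          setLIntegral_congr_fun measurableSet_Ioo fun y hy ↦ ?_
        rw [setLIntegral_Ioo_pow_mul n hy.1.le (by have := hy.1; have := hz.1; positivity)]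
        congr 1
        field_simp [hy.1.ne']
        ring
    _ = ∫⁻ z in Ioo 0 1, ENNReal.ofReal (z ^ n * (((n : ℝ) + 1) ^ 2)⁻¹) := by
        refine setLIntegral_congr_fun measurableSet_Ioo fun z hz ↦ ?_
        rw [setLIntegral_Ioo_pow_mul n hz.1.le (by have := hz.1; positivity)]
        congr 1
        field_simp [hz.1.ne']
        ring
    _ = ENNReal.ofReal (((n : ℝ) + 1) ^ 3)⁻¹ := by
        rw [setLIntegral_Ioo_pow_mul n zero_le_one (by positivity)]
        congr 1
        field_simp
        ring

theorem ofReal_inv_one_sub_mul_eq_tsum {x : ℝ} (hx₀ : 0 ≤ x) (hx₁ : x < 1) {c : ℝ}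
    (hc : 0 ≤ c) :
    ENNReal.ofReal ((1 - x)⁻¹ * c) = ∑' n : ℕ, ENNReal.ofReal (x ^ n * c) := by
  have hsum := (hasSum_geometric_of_lt_one hx₀ hx₁).mul_right c
  rw [← hsum.tsum_eq,
    ENNReal.ofReal_tsum_of_nonneg (fun n ↦ mul_nonneg (pow_nonneg hx₀ n) hc) hsum.summable]

theorem lintegral_openSimplex_eq_tsum :
    ∫⁻ p in openSimplex, ENNReal.ofReal (1 / (1 - p.1) * (1 / p.2.1) * (1 / p.2.2)) =
      ∑' n : ℕ, ENNReal.ofReal (((n : ℝ) + 1) ^ 3)⁻¹ := by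
  calc ∫⁻ p in openSimplex, ENNReal.ofReal (1 / (1 - p.1) * (1 / p.2.1) * (1 / p.2.2))
      = ∫⁻ p in openSimplex, ∑' n : ℕ, ENNReal.ofReal (p.1 ^ n * (p.2.1 * p.2.2)⁻¹) := by
        refine setLIntegral_congr_fun measurableSet_openSimplex fun p ⟨h₀, h₁, h₂, h₃⟩ ↦ ?_
        have hc : 0 ≤ (p.2.1 * p.2.2)⁻¹ := by
          have : 0 < p.2.1 := by linarith
          have : 0 < p.2.2 := by linarith
          positivity
        rw [← ofReal_inv_one_sub_mul_eq_tsum h₀.le (by linarith) hc]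
        congr 1
        field_simp
    _ = ∑' n : ℕ, ENNReal.ofReal (((n : ℝ) + 1) ^ 3)⁻¹ := by
        rw [lintegral_tsum fun n ↦ by fun_prop]
        simp only [lintegral_openSimplex_pow]

/-- Kontsevich's integral representation of `ζ(3)`:
`∫_{0 < t₁ < t₂ < t₃ < 1} dt₁/(1-t₁) · dt₂/t₂ · dt₃/t₃ = ∑_{n ≥ 1} 1/n³`. -/
theorem kontsevich_zeta_three :
    ∫ t in {p : ℝ × ℝ × ℝ | 0 < p.1 ∧ p.1 < p.2.1 ∧ p.2.1 < p.2.2 ∧ p.2.2 < 1},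
      (1 / (1 - t.1)) * (1 / t.2.1) * (1 / t.2.2)
    = ∑' n : ℕ, (1 : ℝ) / ((n : ℝ) + 1) ^ 3 := by
  change ∫ t in openSimplex, 1 / (1 - t.1) * (1 / t.2.1) * (1 / t.2.2) = _
  have hnonneg : ∀ᵐ t ∂volume.restrict openSimplex,
      0 ≤ 1 / (1 - t.1) * (1 / t.2.1) * (1 / t.2.2) := by
    filter_upwards [ae_restrict_mem measurableSet_openSimplex] with t ⟨h₀, h₁, h₂, h₃⟩
    have : 0 < 1 - t.1 := by linarith
    have : 0 < t.2.1 := by linarith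
    have : 0 < t.2.2 := by linarith
    positivity
  rw [integral_eq_lintegral_of_nonneg_ae hnonneg (by fun_prop), lintegral_openSimplex_eq_tsum,
    ENNReal.tsum_toReal_eq fun n ↦ ENNReal.ofReal_ne_top]
  simp only [one_div]
  exact tsum_congr fun n ↦ ENNReal.toReal_ofReal (by positivity)
end

section
/- The iterated integral ∫_{0 < t_1 < t_2 < 1} (dt_1/(1-t_1)) (dt_2/t_2) equals ζ(2) = π²/6. -/
/-!
Integrate over `t₁ ∈ (0, t₂)` first: `∫ dt₁ / (1 - t₁) = -log (1 - t₂)`. Then expand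
`-log (1 - y) / y = ∑ yⁿ / (n + 1)` and integrate term by term to get `∑ 1 / (n + 1)² = ζ(2)`.
The integrand is nonnegative, so the whole computation is done with lower Lebesgue integrals,
where Tonelli and termwise integration need no integrability hypotheses.
-/

open MeasureTheory Real Set
open scoped ENNReal

theorem measurableSet_ordered_pairs (a b : ℝ) :
    MeasurableSet {p : ℝ × ℝ | a < p.1 ∧ p.1 < p.2 ∧ p.2 < b} :=
  (measurableSet_lt measurable_const measurable_fst).inter
    ((measurableSet_lt measurable_fst measurable_snd).inter
      (measurableSet_lt measurable_snd measurable_const))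

theorem lintegral_ordered_pairs {a b : ℝ} {g : ℝ × ℝ → ℝ≥0∞} (hg : Measurable g) :
    ∫⁻ p in {p : ℝ × ℝ | a < p.1 ∧ p.1 < p.2 ∧ p.2 < b}, g p
      = ∫⁻ y in Ioo a b, ∫⁻ x in Ioo a y, g (x, y) := by
  have hS := measurableSet_ordered_pairs a b
  rw [← lintegral_indicator hS, Measure.volume_eq_prod,
    lintegral_prod_symm _ (hg.indicator hS).aemeasurable, ← lintegral_indicator measurableSet_Ioo]
  congr 1 with y
  by_cases hy : y ∈ Ioo a b
  · rw [indicator_of_mem hy, ← lintegral_indicator measurableSet_Ioo]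
    congr 1 with x
    simp only [indicator, mem_ofPred_eq, mem_Ioo, hy.2, and_true]
  · rw [indicator_of_notMem hy]
    refine lintegral_eq_zero_of_ae_eq_zero (.of_forall fun x => indicator_of_notMem ?_ _)
    exact fun h => hy ⟨h.1.trans h.2.1, h.2.2⟩

theorem lintegral_Ioo_ofReal_eq_intervalIntegral {f : ℝ → ℝ} {a b : ℝ} (hab : a ≤ b)
    (hf : IntervalIntegrable f volume a b) (hnn : ∀ x ∈ Ioo a b, 0 ≤ f x) :
    ∫⁻ x in Ioo a b, ENNReal.ofReal (f x) = ENNReal.ofReal (∫ x in a..b, f x) := by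
  rw [intervalIntegral.integral_of_le hab, integral_Ioc_eq_integral_Ioo,
    ofReal_integral_eq_lintegral_ofReal (hf.1.mono_set Ioo_subset_Ioc_self)]
  exact (ae_restrict_iff' measurableSet_Ioo).2 (.of_forall hnn)

theorem integral_one_div_one_sub {y : ℝ} (hy : y < 1) :
    ∫ x in (0 : ℝ)..y, 1 / (1 - x) = -log (1 - y) := by
  rw [intervalIntegral.integral_comp_sub_left (fun u => 1 / u) 1, sub_zero,
    integral_one_div_of_pos (by linarith) one_pos, one_div, log_inv]

theorem hasSum_pow_div_succ {y : ℝ} (h : |y| < 1) (hy : y ≠ 0) :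
    HasSum (fun n : ℕ => y ^ n / (n + 1)) (-log (1 - y) / y) := by
  have shift (n : ℕ) : y ^ (n + 1) / (n + 1) / y = y ^ n / (n + 1) := by
    rw [pow_succ, div_right_comm, mul_div_cancel_right₀ _ hy]
  simpa only [shift] using (hasSum_pow_div_log_of_abs_lt_one h).div_const y

theorem integral_pow_div_succ (n : ℕ) :
    ∫ y in (0 : ℝ)..1, y ^ n / (n + 1) = 1 / ((n : ℝ) + 1) ^ 2 := by
  rw [intervalIntegral.integral_div, integral_pow]
  field_simp
  simp

theorem hasSum_one_div_succ_sq : HasSum (fun n : ℕ => 1 / ((n : ℝ) + 1) ^ 2) (π ^ 2 / 6) := by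
  simpa using (hasSum_nat_add_iff' 1).2 hasSum_zeta_two

theorem lintegral_Ioo_one_div_one_sub_mul_one_div {y : ℝ} (hy : y ∈ Ioo (0 : ℝ) 1) :
    ∫⁻ x in Ioo 0 y, ENNReal.ofReal (1 / (1 - x) * (1 / y))
      = ENNReal.ofReal (-log (1 - y) / y) := by
  have hcont : ContinuousOn (fun x => 1 / (1 - x) * (1 / y)) (uIcc 0 y) := by
    refine (continuousOn_const.div (by fun_prop) fun x hx => ?_).mul continuousOn_const
    rw [uIcc_of_le hy.1.le] at hx
    exact (sub_pos.2 (hx.2.trans_lt hy.2)).ne'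
  rw [lintegral_Ioo_ofReal_eq_intervalIntegral hy.1.le hcont.intervalIntegrable
      fun x hx => mul_nonneg (one_div_nonneg.2 (by linarith [hx.2, hy.2]))
        (one_div_nonneg.2 hy.1.le),
    intervalIntegral.integral_mul_const, integral_one_div_one_sub hy.2, mul_one_div]

theorem lintegral_Ioo_neg_log_one_sub_div :
    ∫⁻ y in Ioo (0 : ℝ) 1, ENNReal.ofReal (-log (1 - y) / y) = ENNReal.ofReal (π ^ 2 / 6) := by
  have hpow_nonneg {y : ℝ} (hy : y ∈ Ioo (0 : ℝ) 1) (n : ℕ) : 0 ≤ y ^ n / (n + 1) := by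
    have := hy.1; positivity
  calc ∫⁻ y in Ioo (0 : ℝ) 1, ENNReal.ofReal (-log (1 - y) / y)
      = ∫⁻ y in Ioo (0 : ℝ) 1, ∑' n : ℕ, ENNReal.ofReal (y ^ n / (n + 1)) := by
        refine setLIntegral_congr_fun measurableSet_Ioo fun y hy => ?_
        have hsum := hasSum_pow_div_succ (abs_lt.2 ⟨by linarith [hy.1], hy.2⟩) hy.1.ne'
        rw [← hsum.tsum_eq, ENNReal.ofReal_tsum_of_nonneg (hpow_nonneg hy) hsum.summable]
    _ = ∑' n : ℕ, ∫⁻ y in Ioo (0 : ℝ) 1, ENNReal.ofReal (y ^ n / (n + 1)) :=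
        lintegral_tsum fun n => by fun_prop
    _ = ∑' n : ℕ, ENNReal.ofReal (1 / ((n : ℝ) + 1) ^ 2) := by
        congr 1 with n
        rw [lintegral_Ioo_ofReal_eq_intervalIntegral zero_le_one
          (Continuous.intervalIntegrable (by fun_prop) _ _) fun y hy => hpow_nonneg hy n,
          integral_pow_div_succ]
    _ = ENNReal.ofReal (π ^ 2 / 6) := by
        rw [← ENNReal.ofReal_tsum_of_nonneg (fun n => by positivity)
          hasSum_one_div_succ_sq.summable, hasSum_one_div_succ_sq.tsum_eq]

/-- Kontsevich's integral formula in weight 2: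
`∫_{0 < t₁ < t₂ < 1} dt₁/(1-t₁) · dt₂/t₂ = ζ(2) = π²/6`. -/
theorem kontsevich_zeta_two :
    ∫ t in {p : ℝ × ℝ | 0 < p.1 ∧ p.1 < p.2 ∧ p.2 < 1},
      (1 / (1 - t.1)) * (1 / t.2)
    = Real.pi ^ 2 / 6 := by
  have hnn : 0 ≤ᵐ[volume.restrict {p : ℝ × ℝ | 0 < p.1 ∧ p.1 < p.2 ∧ p.2 < 1}]
      fun t => (1 / (1 - t.1)) * (1 / t.2) := by
    refine (ae_restrict_iff' (measurableSet_ordered_pairs 0 1)).2 (.of_forall ?_)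
    rintro t ⟨h₁, h₁₂, h₂⟩
    exact mul_nonneg (one_div_nonneg.2 (by linarith)) (one_div_nonneg.2 (by linarith))
  rw [integral_eq_lintegral_of_nonneg_ae hnn (by fun_prop), lintegral_ordered_pairs (by fun_prop),
    setLIntegral_congr_fun measurableSet_Ioo fun y hy =>
      lintegral_Ioo_one_div_one_sub_mul_one_div hy,
    lintegral_Ioo_neg_log_one_sub_div, ENNReal.toReal_ofReal (by positivity)]
end

section
/- Ramanujan's formula: ζ(3) = (7/180)π³ − 2 ∑_{n≥1} 1/(n³(e^{2πn} − 1)). -/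
/-!
Evaluating the Mittag-Leffler expansion of `π cot (π z)` at `z = a i` gives
`∑_{n ≥ 1} 2a / (a² + n²) = π coth (π a) - 1/a`, where `coth (π a) = 1 + 2 / (e^{2πa} - 1)`.
Dividing by `2a³` at `a = m` and summing over `m ≥ 1` computes the double series
`∑_{m,n ≥ 1} 1 / (m² (m² + n²))`. Symmetrising in `(m, n)` turns its summand into
`1 / (m² n²)`, so the double series equals `ζ(2)² / 2 = π⁴/72`. Comparing the two evaluations
and using `ζ(4) = π⁴/90` gives `∑_{m ≥ 1} coth (π m) / m³ = 7π³/180`; splitting off `ζ(3)`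
from the left-hand side gives the formula.
-/

open Real Complex

theorem Real.exp_sub_one_ne_zero {x : ℝ} (hx : x ≠ 0) : Real.exp x - 1 ≠ 0 :=
  sub_ne_zero.2 fun h => hx (Real.exp_eq_one_iff x |>.1 h)

theorem hasSum_cotTerm {x : ℂ} (hx : x ∈ integerComplement) :
    HasSum (cotTerm x) (π * cot (π * x) - 1 / x) :=
  (summable_cotTerm hx).hasSum_iff_tendsto_nat.mpr (tendsto_logDeriv_euler_cot_sub hx)

theorem hasSum_two_mul_div_sq_add_succ_sq {a : ℝ} (ha : a ≠ 0) :
    HasSum (fun n : ℕ => 2 * a / (a ^ 2 + ((n : ℝ) + 1) ^ 2))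
      (π * (1 + 2 / (Real.exp (2 * a * π) - 1)) - 1 / a) := by
  have hx : (a : ℂ) * I ∈ integerComplement := by
    rintro ⟨n, hn⟩
    have him := congrArg Complex.im hn
    simp only [intCast_im, mul_im, ofReal_re, I_im, mul_one, ofReal_im, I_re, mul_zero,
      add_zero] at him
    exact ha him.symm
  have ha' : (a : ℂ) ≠ 0 := by exact_mod_cast ha
  have hterm (n : ℕ) :
      I * cotTerm (a * I) n = ((2 * a / (a ^ 2 + ((n : ℝ) + 1) ^ 2) : ℝ) : ℂ) := by
    have hD : (a : ℂ) ^ 2 + ((n : ℂ) + 1) ^ 2 ≠ 0 := by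
      exact_mod_cast (by positivity : a ^ 2 + ((n : ℝ) + 1) ^ 2 ≠ 0)
    have hprod : ((a : ℂ) * I + (n + 1)) * (a * I - (n + 1))
        = -((a : ℂ) ^ 2 + ((n : ℂ) + 1) ^ 2) := by
      linear_combination (a : ℂ) ^ 2 * I_sq
    rw [cotTerm_identity hx, hprod]
    push_cast
    field_simp
    linear_combination -I_sq
  have hexp : Complex.exp (2 * π * I * (a * I)) = (Real.exp (2 * a * π) : ℂ)⁻¹ := by
    rw [ofReal_exp, ← Complex.exp_neg]
    congr 1
    push_cast
    linear_combination (2 * π * a : ℂ) * I_sq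
  have hE : (Real.exp (2 * a * π) : ℂ) ≠ 0 := by exact_mod_cast (Real.exp_pos _).ne'
  have hE1 : (Real.exp (2 * a * π) : ℂ) - 1 ≠ 0 := by
    exact_mod_cast Real.exp_sub_one_ne_zero (by positivity)
  have hsum : I * (π * cot (π * (a * I)) - 1 / (a * I))
      = ((π * (1 + 2 / (Real.exp (2 * a * π) - 1)) - 1 / a : ℝ) : ℂ) := by
    rw [cot_pi_eq_exp_ratio, hexp]
    push_cast [-ofReal_exp]
    field_simp
    ring_nf
  rw [← hasSum_ofReal, ← hsum]
  simpa only [hterm] using (hasSum_cotTerm hx).mul_left I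

theorem hasSum_one_div_sq_mul_sq_add_succ_sq {a : ℝ} (ha : a ≠ 0) :
    HasSum (fun n : ℕ => 1 / (a ^ 2 * (a ^ 2 + ((n : ℝ) + 1) ^ 2)))
      ((π * (1 + 2 / (Real.exp (2 * a * π) - 1)) - 1 / a) / (2 * a ^ 3)) := by
  refine ((hasSum_two_mul_div_sq_add_succ_sq ha).div_const _).congr_fun fun n => ?_
  have hD : a ^ 2 + ((n : ℝ) + 1) ^ 2 ≠ 0 := by positivity
  field_simp

theorem hasSum_one_div_mul_add {ι : Type*} {u : ι → ℝ} (hu : ∀ i, 0 < u i) {s : ℝ}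
    (hs : HasSum (fun i => 1 / u i) s) :
    HasSum (fun p : ι × ι => 1 / (u p.1 * (u p.1 + u p.2))) (s ^ 2 / 2) := by
  set F : ι × ι → ℝ := fun p => 1 / (u p.1 * (u p.1 + u p.2)) with hF
  have hF_nonneg (p : ι × ι) : 0 ≤ F p := by
    have := hu p.1; have := hu p.2; positivity
  have hprod : HasSum (fun p : ι × ι => 1 / u p.1 * (1 / u p.2)) (s * s) :=
    hs.mul hs <| hs.summable.mul_of_nonneg hs.summable
      (fun i => (one_div_pos.2 (hu i)).le) (fun i => (one_div_pos.2 (hu i)).le)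
  have hsymm (p : ι × ι) : F p + F p.swap = 1 / u p.1 * (1 / u p.2) := by
    have := hu p.1; have := hu p.2
    simp only [hF, Prod.fst_swap, Prod.snd_swap]
    field_simp
    ring
  have hF_summable : Summable F :=
    hprod.summable.of_nonneg_of_le hF_nonneg fun p =>
      (le_add_of_nonneg_right (hF_nonneg p.swap)).trans_eq (hsymm p)
  have hswap : HasSum (fun p : ι × ι => F p.swap) (∑' p, F p) :=
    ((Equiv.prodComm ι ι).hasSum_iff (f := F)).2 hF_summable.hasSum
  have htwice : HasSum (fun p : ι × ι => F p + F p.swap) (2 * ∑' p, F p) := by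
    rw [two_mul]
    exact hF_summable.hasSum.add hswap
  have hval : ∑' p, F p = s ^ 2 / 2 := by
    have := htwice.unique (hprod.congr_fun hsymm)
    linarith
  rw [← hval]
  exact hF_summable.hasSum

theorem hasSum_one_div_succ_pow {k : ℕ} (hk : k ≠ 0) {s : ℝ}
    (h : HasSum (fun n : ℕ => 1 / (n : ℝ) ^ k) s) :
    HasSum (fun n : ℕ => 1 / ((n : ℝ) + 1) ^ k) s := by
  rw [← hasSum_nat_add_iff' 1] at h
  simpa [zero_pow hk] using h

theorem hasSum_one_add_two_div_exp_sub_one_div_succ_cube :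
    HasSum (fun n : ℕ => (1 + 2 / (Real.exp (2 * ((n : ℝ) + 1) * π) - 1)) / ((n : ℝ) + 1) ^ 3)
      (7 / 180 * π ^ 3) := by
  have hdouble := hasSum_one_div_mul_add (u := fun n : ℕ => ((n : ℝ) + 1) ^ 2)
    (fun n => by positivity) (hasSum_one_div_succ_pow two_ne_zero hasSum_zeta_two)
  have hfourth := (hasSum_one_div_succ_pow four_ne_zero hasSum_zeta_four).div_const 2
  have hfiberwise := hdouble.prod_fiberwise fun m =>
    hasSum_one_div_sq_mul_sq_add_succ_sq (a := (m : ℝ) + 1) (by positivity)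
  have hsum := (hfiberwise.add hfourth).mul_left (2 / π)
  rw [show 2 / π * ((π ^ 2 / 6) ^ 2 / 2 + π ^ 4 / 90 / 2) = 7 / 180 * π ^ 3 by
    field_simp; ring] at hsum
  refine hsum.congr_fun fun m => ?_
  have hE : Real.exp (2 * ((m : ℝ) + 1) * π) - 1 ≠ 0 :=
    Real.exp_sub_one_ne_zero (by positivity)
  field_simp
  ring

/-- Ramanujan's formula: `ζ(3) = (7/180)π³ − 2 ∑_{n ≥ 1} 1/(n³(e^{2πn} − 1))`. -/
theorem ramanujan_zeta_three :
    ∑' n : ℕ, (1 : ℝ) / ((n : ℝ) + 1) ^ 3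
    = (7 / 180) * Real.pi ^ 3
      - 2 * ∑' n : ℕ, (1 : ℝ) /
          (((n : ℝ) + 1) ^ 3 * (Real.exp (2 * ((n : ℝ) + 1) * Real.pi) - 1)) := by
  have hzeta3 : Summable (fun n : ℕ => (1 : ℝ) / ((n : ℝ) + 1) ^ 3) := by
    exact_mod_cast (summable_nat_add_iff 1).2
      (Real.summable_one_div_nat_pow.2 (by norm_num : 1 < 3))
  have hrest : HasSum (fun n : ℕ => (1 : ℝ) /
        (((n : ℝ) + 1) ^ 3 * (Real.exp (2 * ((n : ℝ) + 1) * π) - 1)))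
      ((7 / 180 * π ^ 3 - ∑' n : ℕ, (1 : ℝ) / ((n : ℝ) + 1) ^ 3) / 2) :=
    ((hasSum_one_add_two_div_exp_sub_one_div_succ_cube.sub hzeta3.hasSum).div_const 2).congr_fun
      fun n => by
        have hE : Real.exp (2 * ((n : ℝ) + 1) * π) - 1 ≠ 0 :=
          Real.exp_sub_one_ne_zero (by positivity)
        field_simp
        ring
  rw [hrest.tsum_eq]
  ring
end

section
/- The number of Lyndon words of length n over a 2-letter alphabet equals (1/n) ∑_{d | n} μ(n/d) 2^d, where μ is the Möbius function. -/
/-!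
Every word `w` of length `m` over a finite ordered alphabet `α` is, in exactly one way, the
rotation by some `r < d` of a power `u ^ (m / d)` (written `(replicate (m / d) u).flatten`) of a
Lyndon word `u` of length `d ∣ m`. Existence: let `v` be the least rotation of `w` and `d` its
rotation period; then `v = u ^ (m / d)` for its prefix `u` of length `d`, and `u` is smaller than
its proper rotations, i.e. Lyndon, because `v` is. Uniqueness: `u ^ k` is strictly smaller than
its rotations by non-multiples of `|u|`, so it is the least rotation of `w` and has rotation
period `|u|`. Hence `∑_{d ∣ m} d L(d) = |α| ^ m`, and Möbius inversion gives
`n L(n) = ∑_{d ∣ n} μ(n / d) |α| ^ d`.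
-/

/-- A Lyndon word over a totally ordered alphabet: a nonempty word strictly
smaller in lexicographic order than all of its proper nonempty suffixes. -/
def IsLyndon {α : Type*} [LT α] (w : List α) : Prop :=
  w ≠ [] ∧ ∀ u v : List α, w = u ++ v → u ≠ [] → v ≠ [] → List.Lex (· < ·) w v

namespace List

open Function

section Rotation

variable {α : Type*}

theorem flatten_replicate_append_comm (x y : List α) (k : ℕ) :
    (replicate k (x ++ y)).flatten ++ x = x ++ (replicate k (y ++ x)).flatten := by
  induction k with
  | zero => simp
  | succ k ih => simp [replicate_succ, ih]

theorem rotate_one_flatten_replicate (u : List α) (k : ℕ) :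
    (replicate k u).flatten.rotate 1 = (replicate k (u.rotate 1)).flatten := by
  rcases u with _ | ⟨a, u⟩
  · simp
  rcases k with _ | k
  · simp
  simpa [replicate_succ] using flatten_replicate_append_comm [a] u k

theorem rotate_flatten_replicate (u : List α) (k n : ℕ) :
    (replicate k u).flatten.rotate n = (replicate k (u.rotate n)).flatten := by
  induction n with
  | zero => simp
  | succ n ih => rw [← rotate_rotate, ih, rotate_one_flatten_replicate, rotate_rotate]

theorem take_length_flatten_replicate (u : List α) {k : ℕ} (hk : k ≠ 0) :
    (replicate k u).flatten.take u.length = u := by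
  obtain ⟨k, rfl⟩ := Nat.exists_eq_succ_of_ne_zero hk
  simp [replicate_succ]

theorem eq_flatten_replicate_of_append_comm {s t : List α} {k : ℕ}
    (hlen : t.length = k * s.length) (h : t ++ s = s ++ t) : t = (replicate k s).flatten := by
  induction k generalizing t with
  | zero => simpa using hlen
  | succ k ih =>
    have hst : s.length ≤ t.length := hlen ▸ Nat.le_mul_of_pos_left _ k.succ_pos
    obtain ⟨t', rfl⟩ : s <+: t :=
      prefix_of_prefix_length_le (h ▸ prefix_append s t) (prefix_append t s) hst
    rw [append_assoc, append_cancel_left_eq] at h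
    rw [length_append, Nat.succ_mul] at hlen
    rw [ih (by omega) h, replicate_succ, flatten_cons]

theorem eq_flatten_replicate_take_of_rotate_eq {l : List α} {d k : ℕ}
    (hlen : l.length = k * d) (h : l.rotate d = l) : l = (replicate k (l.take d)).flatten := by
  rcases Nat.eq_zero_or_pos k with rfl | hk
  · simpa using hlen
  have hd : d ≤ l.length := hlen ▸ Nat.le_mul_of_pos_left d hk
  apply eq_flatten_replicate_of_append_comm (by rw [length_take_of_le hd, hlen])
  calc l ++ l.take d = l.take d ++ l.drop d ++ l.take d := by rw [take_append_drop]
    _ = l.take d ++ l.rotate d := by rw [rotate_eq_drop_append_take hd, append_assoc]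
    _ = l.take d ++ l := by rw [h]

noncomputable def rotationPeriod (l : List α) : ℕ :=
  minimalPeriod (rotate · 1) l

theorem iterate_rotate_one (l : List α) (n : ℕ) : (rotate · 1)^[n] l = l.rotate n := by
  induction n with
  | zero => simp
  | succ n ih => rw [iterate_succ_apply', ih, rotate_rotate]

theorem isPeriodicPt_rotate_one_iff {l : List α} {n : ℕ} :
    IsPeriodicPt (rotate · 1) n l ↔ l.rotate n = l := by
  rw [IsPeriodicPt, IsFixedPt, iterate_rotate_one]

theorem rotationPeriod_dvd_iff {l : List α} {n : ℕ} : l.rotationPeriod ∣ n ↔ l.rotate n = l :=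
  isPeriodicPt_iff_minimalPeriod_dvd.symm.trans isPeriodicPt_rotate_one_iff

theorem rotate_rotationPeriod (l : List α) : l.rotate l.rotationPeriod = l :=
  rotationPeriod_dvd_iff.mp dvd_rfl

theorem rotationPeriod_dvd_length (l : List α) : l.rotationPeriod ∣ l.length :=
  rotationPeriod_dvd_iff.mpr l.rotate_length

theorem rotationPeriod_pos {l : List α} (hl : l ≠ []) : 0 < l.rotationPeriod :=
  Nat.pos_of_dvd_of_pos l.rotationPeriod_dvd_length (length_pos_iff.mpr hl)

theorem length_take_rotationPeriod {l : List α} (hl : l ≠ []) :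
    (l.take l.rotationPeriod).length = l.rotationPeriod :=
  length_take_of_le (Nat.le_of_dvd (length_pos_iff.mpr hl) l.rotationPeriod_dvd_length)

theorem rotate_mod_rotationPeriod (l : List α) (n : ℕ) :
    l.rotate (n % l.rotationPeriod) = l.rotate n := by
  simpa only [rotationPeriod, iterate_rotate_one] using
    iterate_mod_minimalPeriod_eq (f := (rotate · 1)) (x := l)

theorem rotate_ne_self_of_lt_rotationPeriod {l : List α} {n : ℕ} (hn : n ≠ 0)
    (h : n < l.rotationPeriod) : l.rotate n ≠ l :=
  fun h' => not_isPeriodicPt_of_pos_of_lt_minimalPeriod hn h (isPeriodicPt_rotate_one_iff.mpr h')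

theorem rotate_injOn_Iio_rotationPeriod (l : List α) :
    (Set.Iio l.rotationPeriod).InjOn l.rotate := by
  simpa only [rotationPeriod, iterate_rotate_one] using
    iterate_injOn_Iio_minimalPeriod (f := (rotate · 1)) (x := l)

theorem eq_flatten_replicate_take_rotationPeriod (l : List α) :
    l = (replicate (l.length / l.rotationPeriod) (l.take l.rotationPeriod)).flatten :=
  eq_flatten_replicate_take_of_rotate_eq
    (Nat.div_mul_cancel l.rotationPeriod_dvd_length).symm l.rotate_rotationPeriod

end Rotation

section Lex

variable {α : Type*} [LinearOrder α]

theorem append_lt_append_of_lt_of_length_eq {x y : List α} (s t : List α) (h : x < y)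
    (hlen : x.length = y.length) : x ++ s < y ++ t := by
  induction x generalizing y with
  | nil => rcases y with _ | _ <;> simp_all
  | cons a x ih =>
    rcases y with _ | ⟨b, y⟩
    · simp at hlen
    rcases cons_lt_cons_iff.mp h with hab | ⟨rfl, h'⟩
    · exact Lex.rel hab
    · exact Lex.cons (ih h' (by simpa using hlen))

theorem append_lt_append_left_iff (s : List α) {x y : List α} : s ++ x < s ++ y ↔ x < y := by
  induction s with
  | nil => rfl
  | cons a s ih => simpa using ih

theorem lt_append_of_lt_of_length_le {x y : List α} (t : List α) (h : x < y)
    (hlen : y.length ≤ x.length) : x < y ++ t := by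
  induction x generalizing y with
  | nil => simp_all
  | cons a x ih =>
    rcases y with _ | ⟨b, y⟩
    · simp at h
    rcases cons_lt_cons_iff.mp h with hab | ⟨rfl, h'⟩
    · exact Lex.rel hab
    · exact Lex.cons (ih h' (by simpa using hlen))

theorem lt_of_lt_append_of_not_prefix {x y t : List α} (h : x < y ++ t) (hp : ¬ y <+: x) :
    x < y := by
  induction x generalizing y with
  | nil => rcases y with _ | ⟨b, y⟩ <;> simp_all
  | cons a x ih =>
    rcases y with _ | ⟨b, y⟩
    · simp at hp
    rcases cons_lt_cons_iff.mp h with hab | ⟨rfl, h'⟩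
    · exact Lex.rel hab
    · exact Lex.cons (ih h' (by simpa using hp))

theorem flatten_replicate_lt_flatten_replicate_iff {x y : List α} {k : ℕ} (hk : k ≠ 0)
    (hlen : x.length = y.length) :
    (replicate k x).flatten < (replicate k y).flatten ↔ x < y := by
  obtain ⟨k, rfl⟩ := Nat.exists_eq_succ_of_ne_zero hk
  refine ⟨fun h => lt_of_not_ge fun hyx => ?_,
    fun h => append_lt_append_of_lt_of_length_eq _ _ h hlen⟩
  rcases hyx.lt_or_eq with hyx | rfl
  · exact lt_asymm h (append_lt_append_of_lt_of_length_eq _ _ hyx hlen.symm)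
  · exact lt_irrefl _ h

theorem exists_isRotated_forall_le_rotate (w : List α) : ∃ v, v ~r w ∧ ∀ n, v ≤ v.rotate n := by
  obtain ⟨v, hv, hmin⟩ := w.cyclicPermutations.toFinset.exists_min_image id
    ⟨w, mem_toFinset.mpr (mem_cyclicPermutations_self w)⟩
  rw [mem_toFinset, mem_cyclicPermutations_iff] at hv
  exact ⟨v, hv, fun n => hmin _ (mem_toFinset.mpr
    (mem_cyclicPermutations_iff.mpr ((IsRotated.symm ⟨n, rfl⟩).trans hv)))⟩

end Lex

theorem ncard_length_eq (α : Type*) [Fintype α] (n : ℕ) :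
    {l : List α | l.length = n}.ncard = Fintype.card α ^ n := by
  rw [← Nat.card_coe_set_eq, ← card_vector, ← Nat.card_eq_fintype_card]
  rfl

end List

section Lyndon

open List

variable {α : Type*} [LinearOrder α]

theorem isLyndon_iff_lt_rotate {w : List α} :
    IsLyndon w ↔ w ≠ [] ∧ ∀ i, 0 < i → i < w.length → w < w.rotate i := by
  refine ⟨fun ⟨hw, hsuffix⟩ => ⟨hw, fun i hi hiw => ?_⟩, fun ⟨hw, hrot⟩ => ⟨hw, ?_⟩⟩
  · have hlt : w < w.drop i := hsuffix _ _ (take_append_drop i w).symm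
      (by simp [← length_pos_iff]; omega) (by simpa [← length_pos_iff] using hiw)
    rw [rotate_eq_drop_append_take hiw.le]
    exact lt_append_of_lt_of_length_le _ hlt (by simp)
  · rintro u v rfl hu hv
    have hu := length_pos_iff.mpr hu
    have hv := length_pos_iff.mpr hv
    have huv : u ++ v < v ++ u := by
      simpa [rotate_append_length_eq] using hrot u.length hu (by simpa using hv)
    by_cases hp : v <+: u ++ v
    -- then `u ++ v = v ++ t`; the rotation by `|u|` gives `t < u`, the one by `|v|` gives `u ≤ t`
    · obtain ⟨t, ht⟩ := hp
      have htu : t.length = u.length := by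
        have := congrArg length ht
        simp only [length_append] at this
        omega
      have htv : u ++ v < t ++ v := by
        have := hrot v.length hv (by simpa using hu)
        rwa [← ht, rotate_append_length_eq, ht] at this
      have htu' : t < u := (append_lt_append_left_iff v).mp (ht ▸ huv)
      exact absurd htv (lt_asymm (append_lt_append_of_lt_of_length_eq _ _ htu' htu))
    · exact lt_of_lt_append_of_not_prefix huv hp

namespace IsLyndon

variable {u : List α} {k : ℕ}

theorem lt_rotate_flatten_replicate (hu : IsLyndon u) (hk : k ≠ 0) {n : ℕ}
    (hn : ¬ u.length ∣ n) : (replicate k u).flatten < (replicate k u).flatten.rotate n := by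
  rw [rotate_flatten_replicate, ← rotate_mod,
    flatten_replicate_lt_flatten_replicate_iff hk (length_rotate _ _).symm]
  exact (isLyndon_iff_lt_rotate.mp hu).2 _ (Nat.pos_of_ne_zero (mt Nat.dvd_of_mod_eq_zero hn))
    (Nat.mod_lt _ (length_pos_iff.mpr hu.1))

theorem rotate_flatten_replicate_eq_self_iff (hu : IsLyndon u) (hk : k ≠ 0) {n : ℕ} :
    (replicate k u).flatten.rotate n = (replicate k u).flatten ↔ u.length ∣ n := by
  refine ⟨fun h => ?_, ?_⟩
  · by_contra hn
    exact (hu.lt_rotate_flatten_replicate hk hn).ne h.symm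
  · rintro ⟨q, rfl⟩
    rw [rotate_flatten_replicate, rotate_length_mul]

theorem rotationPeriod_flatten_replicate (hu : IsLyndon u) (hk : k ≠ 0) :
    (replicate k u).flatten.rotationPeriod = u.length :=
  Nat.dvd_antisymm
    (rotationPeriod_dvd_iff.mpr ((hu.rotate_flatten_replicate_eq_self_iff hk).mpr dvd_rfl))
    ((hu.rotate_flatten_replicate_eq_self_iff hk).mp (rotate_rotationPeriod _))

theorem flatten_replicate_le_of_isRotated (hu : IsLyndon u) (hk : k ≠ 0) {v : List α}
    (hv : (replicate k u).flatten ~r v) : (replicate k u).flatten ≤ v := by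
  obtain ⟨n, rfl⟩ := hv
  by_cases hn : u.length ∣ n
  · rw [(hu.rotate_flatten_replicate_eq_self_iff hk).mpr hn]
  · exact (hu.lt_rotate_flatten_replicate hk hn).le

theorem eq_of_rotate_flatten_replicate_eq {u' : List α} {k' r r' : ℕ} (hu : IsLyndon u)
    (hu' : IsLyndon u') (hk : k ≠ 0) (hk' : k' ≠ 0) (hr : r < u.length) (hr' : r' < u'.length)
    (h : (replicate k u).flatten.rotate r = (replicate k' u').flatten.rotate r') :
    u = u' ∧ r = r' := by
  have hrot : (replicate k u).flatten ~r (replicate k' u').flatten :=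
    IsRotated.trans ⟨r, h⟩ (IsRotated.symm ⟨r', rfl⟩)
  have hpow : (replicate k u).flatten = (replicate k' u').flatten :=
    le_antisymm (hu.flatten_replicate_le_of_isRotated hk hrot)
      (hu'.flatten_replicate_le_of_isRotated hk' hrot.symm)
  have hlen : u.length = u'.length := by
    rw [← hu.rotationPeriod_flatten_replicate hk, hpow, hu'.rotationPeriod_flatten_replicate hk']
  obtain rfl : u = u' := by
    rw [← take_length_flatten_replicate u hk, hpow, hlen, take_length_flatten_replicate u' hk']
  rw [← hpow] at h
  refine ⟨rfl, rotate_injOn_Iio_rotationPeriod _ ?_ ?_ h⟩ <;>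
    rwa [Set.mem_Iio, hu.rotationPeriod_flatten_replicate hk]

end IsLyndon

theorem isLyndon_take_rotationPeriod {v : List α} (hv : v ≠ []) (hmin : ∀ n, v ≤ v.rotate n) :
    IsLyndon (v.take v.rotationPeriod) := by
  have hk : v.length / v.rotationPeriod ≠ 0 :=
    (Nat.div_ne_zero_iff_of_dvd v.rotationPeriod_dvd_length).mpr
      ⟨(length_pos_iff.mpr hv).ne', (rotationPeriod_pos hv).ne'⟩
  refine isLyndon_iff_lt_rotate.mpr ⟨?_, fun i hi hid => ?_⟩
  · exact ne_nil_of_length_pos (by rw [length_take_rotationPeriod hv]; exact rotationPeriod_pos hv)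
  rw [length_take_rotationPeriod hv] at hid
  have hlt : v < v.rotate i :=
    (hmin i).lt_of_ne (rotate_ne_self_of_lt_rotationPeriod hi.ne' hid).symm
  rw [eq_flatten_replicate_take_rotationPeriod v] at hlt
  rwa [rotate_flatten_replicate,
    flatten_replicate_lt_flatten_replicate_iff hk (length_rotate _ _).symm] at hlt

theorem exists_isLyndon_eq_rotate_flatten_replicate {w : List α} (hw : w ≠ []) :
    ∃ u, IsLyndon u ∧ u.length ∣ w.length ∧
      ∃ r < u.length, w = (replicate (w.length / u.length) u).flatten.rotate r := by
  obtain ⟨v, ⟨s, rfl⟩, hmin⟩ := exists_isRotated_forall_le_rotate w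
  have hv : v ≠ [] := by simpa using hw
  refine ⟨_, isLyndon_take_rotationPeriod hv hmin, ?_, s % v.rotationPeriod, ?_, ?_⟩
  · simpa [length_take_rotationPeriod hv] using v.rotationPeriod_dvd_length
  · rw [length_take_rotationPeriod hv]
    exact Nat.mod_lt _ (rotationPeriod_pos hv)
  · rw [length_rotate, length_take_rotationPeriod hv, ← eq_flatten_replicate_take_rotationPeriod,
      rotate_mod_rotationPeriod]

end Lyndon

open Finset in
theorem sum_divisors_mul_ncard_isLyndon (α : Type*) [Fintype α] [LinearOrder α] {m : ℕ}
    (hm : 0 < m) :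
    ∑ d ∈ m.divisors, d * {w : List α | w.length = d ∧ IsLyndon w}.ncard = Fintype.card α ^ m := by
  have hfin (d : ℕ) : {w : List α | w.length = d ∧ IsLyndon w}.Finite :=
    (List.finite_length_eq α d).subset fun _ hw => hw.1
  have hk {u : List α} (hu : IsLyndon u) (hdvd : u.length ∣ m) : m / u.length ≠ 0 :=
    (Nat.div_ne_zero_iff_of_dvd hdvd).mpr ⟨hm.ne', (List.length_pos_iff.mpr hu.1).ne'⟩
  rw [← List.ncard_length_eq, Set.ncard_eq_toFinset_card _ (List.finite_length_eq α m)]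
  calc ∑ d ∈ m.divisors, d * {w : List α | w.length = d ∧ IsLyndon w}.ncard
      = #(m.divisors.sigma fun d => (hfin d).toFinset ×ˢ range d) := by
        rw [card_sigma]
        refine sum_congr rfl fun d _ => ?_
        rw [card_product, card_range, Set.ncard_eq_toFinset_card _ (hfin d), mul_comm]
    _ = #(List.finite_length_eq α m).toFinset := by
      refine card_bij (fun p _ => (List.replicate (m / p.1) p.2.1).flatten.rotate p.2.2) ?_ ?_ ?_
      · rintro ⟨d, u, r⟩ hp
        simp only [mem_sigma, mem_product, Nat.mem_divisors, Set.Finite.mem_toFinset,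
          Set.mem_ofPred_eq] at hp
        obtain ⟨⟨hdm, -⟩, ⟨rfl, -⟩, -⟩ := hp
        simp [Nat.div_mul_cancel hdm]
      · rintro ⟨d, u, r⟩ hp ⟨d', u', r'⟩ hp' h
        simp only [mem_sigma, mem_product, Nat.mem_divisors, Set.Finite.mem_toFinset,
          Set.mem_ofPred_eq, mem_range] at hp hp'
        obtain ⟨⟨hdm, -⟩, ⟨rfl, hu⟩, hr⟩ := hp
        obtain ⟨⟨hdm', -⟩, ⟨rfl, hu'⟩, hr'⟩ := hp'
        obtain ⟨rfl, rfl⟩ :=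
          hu.eq_of_rotate_flatten_replicate_eq hu' (hk hu hdm) (hk hu' hdm') hr hr' h
        rfl
      · intro w hw
        rw [Set.Finite.mem_toFinset, Set.mem_ofPred_eq] at hw
        obtain ⟨u, hu, hdvd, r, hr, hwu⟩ :=
          exists_isLyndon_eq_rotate_flatten_replicate (List.ne_nil_of_length_pos (hw ▸ hm))
        refine ⟨⟨u.length, u, r⟩, ?_, by rw [← hw]; exact hwu.symm⟩
        simpa [hu, hr, hm.ne'] using hw ▸ hdvd

open ArithmeticFunction in
theorem mul_ncard_isLyndon (α : Type*) [Fintype α] [LinearOrder α] {n : ℕ} (hn : 0 < n) :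
    (n * {w : List α | w.length = n ∧ IsLyndon w}.ncard : ℤ) =
      ∑ d ∈ n.divisors, (moebius (n / d) : ℤ) * (Fintype.card α : ℤ) ^ d := by
  have h := (sum_eq_iff_sum_mul_moebius_eq (R := ℤ)
    (f := fun d => d * {w : List α | w.length = d ∧ IsLyndon w}.ncard)
    (g := fun m => (Fintype.card α : ℤ) ^ m)).mp
    (fun m hm => by exact_mod_cast sum_divisors_mul_ncard_isLyndon α hm) n hn
  rw [← h]
  exact Nat.sum_divisorsAntidiagonal' fun a b => (moebius a : ℤ) * (Fintype.card α : ℤ) ^ b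

/-- The number of Lyndon words of length `n` over a 2-letter alphabet equals
`(1/n) ∑_{d ∣ n} μ(n/d) 2^d`, where `μ` is the Möbius function. -/
theorem lyndon_count_two_letters (n : ℕ) (hn : 0 < n) :
    (Set.ncard {w : List (Fin 2) | w.length = n ∧ IsLyndon w} : ℚ)
    = (1 / (n : ℚ)) *
        ∑ d ∈ n.divisors, ((ArithmeticFunction.moebius (n / d) : ℤ) : ℚ) * 2 ^ d := by
  have h := congrArg (Int.cast : ℤ → ℚ) (mul_ncard_isLyndon (Fin 2) hn)
  push_cast [Fintype.card_fin] at h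
  rw [← h]
  field_simp
end
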